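/- Let ℙ be an atomless probability measure and 0 ≤ k₁ < 1 < k₂ constants, and 𝓟(ℙ,k₁,k₂) = {ℚ ≪ ℙ : k₁ ≤ dℚ/dℙ ≤ k₂}. Then for every A ∈ 𝓕, sup_{ℚ ∈ 𝓟(ℙ,k₁,k₂)} ℚ(A) = g(ℙ(A)) where g(x) = min(k₂·x, k₁·x + 1 − k₁). Consequently, for every increasing Λ: ℝ → (0,1), sup_{ℚ ∈ 𝓟(ℙ,k₁,k₂)} ΛVaR^ℚ(X) = (g⁻¹ ∘ Λ)VaR^ℙ(X) for all random variables X, where g⁻¹ is the inverse of g on [0,1]. -/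

import Mathlib

open Set MeasureTheory
open scoped ENNReal

/-!
If `k₁ ≤ dQ/dℙ ≤ k₂`, then `Q(A) ≤ k₂ ℙ(A)` and `1 - Q(A) = Q(Aᶜ) ≥ k₁ (1 - ℙ(A))`, so
`Q(A) ≤ g(ℙ(A))`. The bound is attained by a density that is constant on `A` and on `Aᶜ`, equal
to `k₂` on `A` or to `k₁` on `Aᶜ` according to which branch of the minimum is active.
For ΛVaR, `Q(X > x) ≤ g(ℙ(X > x)) ≤ Λ(x)` whenever `ℙ(X > x) ≤ g⁻¹(Λ(x))`, and
conversely, if `ℙ(X > x) > g⁻¹(Λ(x))` then, `g` being strictly increasing below `1 > Λ(x)`, the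
measure attaining `g(ℙ(X > x))` violates the ΛVaR condition at every level `z < x` because `Λ` is
increasing, so its ΛVaR is at least `x`.
-/

/-- Lambda Value-at-Risk of `X` with respect to a capacity `w` and function `Λ`:
`inf {x ∈ ℝ : w(X > x) ≤ Λ(x)}`, valued in the extended reals (`inf ∅ = ⊤`). -/
noncomputable def LVaR {Ω : Type*} (w : Set Ω → ℝ) (Λ : ℝ → ℝ) (X : Ω → ℝ) : EReal :=
  sInf ((fun x : ℝ => (x : EReal)) '' {x : ℝ | w {ω | x < X ω} ≤ Λ x})

section LVaR

variable {Ω : Type*} {w w' : Set Ω → ℝ} {Λ Λ' : ℝ → ℝ} {X : Ω → ℝ}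

theorem LVaR_le_LVaR (h : ∀ x, w' {ω | x < X ω} ≤ Λ' x → w {ω | x < X ω} ≤ Λ x) :
    LVaR w Λ X ≤ LVaR w' Λ' X :=
  sInf_le_sInf (image_mono h)

theorem lt_of_coe_lt_LVaR {x : ℝ} (hx : (x : EReal) < LVaR w Λ X) :
    Λ x < w {ω | x < X ω} :=
  lt_of_not_ge fun hle => hx.not_ge (sInf_le (mem_image_of_mem _ hle))

theorem coe_le_LVaR_of_lt (hw : Monotone w) (hΛ : Monotone Λ) {x : ℝ}
    (hx : Λ x < w {ω | x < X ω}) : (x : EReal) ≤ LVaR w Λ X := by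
  refine le_sInf ?_
  rintro _ ⟨z, hz, rfl⟩
  by_contra! hzx
  have hsub : {ω | x < X ω} ⊆ {ω | z < X ω} := fun ω h => (EReal.coe_lt_coe_iff.1 hzx).trans h
  exact (hx.trans_le (hw hsub)).not_ge (hz.trans (hΛ (EReal.coe_lt_coe_iff.1 hzx).le))

end LVaR

-- `0 ≤ c` is needed because `⨆ _ : a ∈ S, f a = 0` when `a ∉ S`.
theorem Real.biSup_eq_of_isGreatest {α : Type*} {S : Set α} {f : α → ℝ} {c : ℝ} (hc : 0 ≤ c)
    (h : IsGreatest (f '' S) c) : ⨆ a ∈ S, f a = c := by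
  have hle : ∀ a, ⨆ _ : a ∈ S, f a ≤ c := fun a =>
    Real.iSup_le (fun ha => h.2 ⟨a, ha, rfl⟩) hc
  obtain ⟨a, ha, rfl⟩ := h.1
  refine le_antisymm (Real.iSup_le hle hc) ?_
  exact le_ciSup_of_le ⟨f a, forall_mem_range.2 hle⟩ a (ciSup_pos (f := fun _ => f a) ha).ge

section RadonNikodym

variable {α : Type*} {m : MeasurableSpace α} {μ ν : Measure α} {c : ℝ}

theorem measureReal_le_mul_of_ae_toReal_rnDeriv_le [IsFiniteMeasure μ] [IsFiniteMeasure ν]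
    (hμν : μ ≪ ν) (hc : 0 ≤ c) (h : ∀ᵐ x ∂ν, (μ.rnDeriv ν x).toReal ≤ c) (s : Set α) :
    μ.real s ≤ c * ν.real s := by
  have h' : ∀ᵐ x ∂ν, μ.rnDeriv ν x ≤ ENNReal.ofReal c := by
    filter_upwards [h, Measure.rnDeriv_lt_top μ ν] with x hx hlt
    exact (ENNReal.le_ofReal_iff_toReal_le hlt.ne hc).2 hx
  have hle : μ s ≤ ENNReal.ofReal c * ν s := calc
    μ s = ∫⁻ x in s, μ.rnDeriv ν x ∂ν := (Measure.setLIntegral_rnDeriv hμν s).symm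
    _ ≤ ∫⁻ _ in s, ENNReal.ofReal c ∂ν := lintegral_mono_ae (ae_restrict_of_ae h')
    _ = ENNReal.ofReal c * ν s := setLIntegral_const s _
  calc μ.real s ≤ (ENNReal.ofReal c * ν s).toReal :=
        ENNReal.toReal_mono (ENNReal.mul_ne_top ENNReal.ofReal_ne_top (measure_ne_top _ _)) hle
    _ = c * ν.real s := by rw [ENNReal.toReal_mul, ENNReal.toReal_ofReal hc, measureReal_def]

theorem mul_measureReal_le_of_ae_le_toReal_rnDeriv [IsFiniteMeasure μ]
    (hc : 0 ≤ c) (h : ∀ᵐ x ∂ν, c ≤ (μ.rnDeriv ν x).toReal) (s : Set α) :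
    c * ν.real s ≤ μ.real s := by
  have hle : ENNReal.ofReal c * ν s ≤ μ s := calc
    ENNReal.ofReal c * ν s = ∫⁻ _ in s, ENNReal.ofReal c ∂ν := (setLIntegral_const s _).symm
    _ ≤ ∫⁻ x in s, μ.rnDeriv ν x ∂ν :=
      lintegral_mono_ae (ae_restrict_of_ae (h.mono fun _ => ENNReal.ofReal_le_of_le_toReal))
    _ ≤ μ s := Measure.setLIntegral_rnDeriv_le s
  calc c * ν.real s = (ENNReal.ofReal c * ν s).toReal := by
        rw [ENNReal.toReal_mul, ENNReal.toReal_ofReal hc, measureReal_def]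
    _ ≤ μ.real s := ENNReal.toReal_mono (measure_ne_top _ _) hle

end RadonNikodym

noncomputable def lrDistortion (k₁ k₂ x : ℝ) : ℝ := min (k₂ * x) (k₁ * x + 1 - k₁)

section Distortion

variable {k₁ k₂ : ℝ}

theorem lrDistortion_monotone (hk₁ : 0 ≤ k₁) (hk₂ : 0 ≤ k₂) : Monotone (lrDistortion k₁ k₂) :=
  fun _ _ h => min_le_min (by gcongr) (by gcongr)

theorem lrDistortion_lt_lrDistortion (hk₁ : 0 ≤ k₁) (hk₂ : 0 < k₂) {u v : ℝ}
    (hv : lrDistortion k₁ k₂ v < 1) (hvu : v < u) :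
    lrDistortion k₁ k₂ v < lrDistortion k₁ k₂ u := by
  unfold lrDistortion at *
  refine lt_min ((min_le_left _ _).trans_lt (by gcongr)) ?_
  rcases hk₁.eq_or_lt with rfl | hk₁
  · simpa using hv
  · exact (min_le_right _ _).trans_lt (by gcongr)

theorem exists_weights_lrDistortion (hk₁ : k₁ < 1) (hk₂ : 1 < k₂) (p : ℝ) :
    ∃ a b, a ∈ Icc k₁ k₂ ∧ b ∈ Icc k₁ k₂ ∧ a * p + b * (1 - p) = 1 ∧
      a * p = lrDistortion k₁ k₂ p := by
  rcases le_total (k₂ * p) (k₁ * p + 1 - k₁) with hc | hc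
  · have hp : 0 < 1 - p := by nlinarith
    refine ⟨k₂, (1 - k₂ * p) / (1 - p), ⟨by linarith, le_rfl⟩, ⟨?_, ?_⟩, ?_, (min_eq_left hc).symm⟩
    · rw [le_div_iff₀ hp]; linarith
    · rw [div_le_iff₀ hp]; nlinarith
    · field_simp; ring
  · have hp : 0 < p := by nlinarith
    refine ⟨(1 - k₁ * (1 - p)) / p, k₁, ⟨?_, ?_⟩, ⟨le_rfl, by linarith⟩, ?_, ?_⟩
    · rw [le_div_iff₀ hp]; linarith
    · rw [div_le_iff₀ hp]; linarith
    · field_simp; ring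
    · rw [lrDistortion, min_eq_right hc]; field_simp; ring

end Distortion

open Classical in
theorem exists_isProbabilityMeasure_rnDeriv_ite {Ω : Type*} [MeasurableSpace Ω] (P : Measure Ω)
    [IsFiniteMeasure P] {A : Set Ω} (hA : MeasurableSet A) {a b : ℝ} (ha : 0 ≤ a) (hb : 0 ≤ b)
    (hab : a * P.real A + b * P.real Aᶜ = 1) :
    ∃ Q : Measure Ω, IsProbabilityMeasure Q ∧ Q ≪ P ∧
      (∀ᵐ ω ∂P, (Q.rnDeriv P ω).toReal = if ω ∈ A then a else b) ∧ Q.real A = a * P.real A := by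
  set d : Ω → ℝ≥0∞ := fun ω => ENNReal.ofReal (if ω ∈ A then a else b)
  have hd : Measurable d := (Measurable.ite hA measurable_const measurable_const).ennreal_ofReal
  have hQ : ∀ {s : Set Ω} {c : ℝ}, 0 ≤ c → MeasurableSet s → (∀ ω ∈ s, d ω = ENNReal.ofReal c) →
      P.withDensity d s = ENNReal.ofReal (c * P.real s) := fun hc hs hsd => by
    rw [withDensity_apply d hs, setLIntegral_congr_fun hs hsd, setLIntegral_const,
      ENNReal.ofReal_mul hc, ofReal_measureReal]
  have hQA := hQ ha hA fun ω hω => by simp [d, hω]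
  have hQAc := hQ hb hA.compl fun ω hω => by simp [d, notMem_of_mem_compl hω]
  refine ⟨P.withDensity d, ⟨?_⟩, withDensity_absolutelyContinuous P d, ?_, ?_⟩
  · rw [← measure_add_measure_compl hA, hQA, hQAc, ← ENNReal.ofReal_add (by positivity)
      (by positivity), hab, ENNReal.ofReal_one]
  · filter_upwards [Measure.rnDeriv_withDensity P hd] with ω h
    split_ifs <;> simp_all [d]
  · rw [measureReal_def, hQA, ENNReal.toReal_ofReal (by positivity)]

def likelihoodRatioSet {Ω : Type*} [MeasurableSpace Ω] (P : Measure Ω) (k₁ k₂ : ℝ) :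
    Set (Measure Ω) :=
  {Q | IsProbabilityMeasure Q ∧ Q ≪ P ∧
    ∀ᵐ ω ∂P, k₁ ≤ (Q.rnDeriv P ω).toReal ∧ (Q.rnDeriv P ω).toReal ≤ k₂}

section LikelihoodRatioSet

variable {Ω : Type*} [MeasurableSpace Ω] {P : Measure Ω} [IsProbabilityMeasure P] {k₁ k₂ : ℝ}

theorem measureReal_le_lrDistortion (hk₁ : 0 ≤ k₁) (hk₂ : 0 ≤ k₂) {Q : Measure Ω}
    (hQ : Q ∈ likelihoodRatioSet P k₁ k₂) {A : Set Ω} (hA : MeasurableSet A) :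
    Q.real A ≤ lrDistortion k₁ k₂ (P.real A) := by
  obtain ⟨hQ, hQP, hbd⟩ := hQ
  have hupper := measureReal_le_mul_of_ae_toReal_rnDeriv_le hQP hk₂ (hbd.mono fun _ h => h.2) A
  have hlower := mul_measureReal_le_of_ae_le_toReal_rnDeriv hk₁ (hbd.mono fun _ h => h.1) Aᶜ
  rw [probReal_compl_eq_one_sub (μ := Q) hA, probReal_compl_eq_one_sub hA] at hlower
  exact le_min hupper (by linarith)

theorem exists_mem_likelihoodRatioSet_measureReal_eq (hk₁ : 0 ≤ k₁) (hk₁1 : k₁ < 1)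
    (hk₂ : 1 < k₂) {A : Set Ω} (hA : MeasurableSet A) :
    ∃ Q ∈ likelihoodRatioSet P k₁ k₂, Q.real A = lrDistortion k₁ k₂ (P.real A) := by
  obtain ⟨a, b, ha, hb, hab, hg⟩ := exists_weights_lrDistortion hk₁1 hk₂ (P.real A)
  rw [← probReal_compl_eq_one_sub hA] at hab
  obtain ⟨Q, hQ, hQP, hdens, hQA⟩ :=
    exists_isProbabilityMeasure_rnDeriv_ite P hA (hk₁.trans ha.1) (hk₁.trans hb.1) hab
  refine ⟨Q, ⟨hQ, hQP, ?_⟩, hQA.trans hg⟩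
  filter_upwards [hdens] with ω h
  rw [h]
  split_ifs
  exacts [ha, hb]

theorem iSup_measureReal_likelihoodRatioSet (hk₁ : 0 ≤ k₁) (hk₁1 : k₁ < 1) (hk₂ : 1 < k₂)
    {A : Set Ω} (hA : MeasurableSet A) :
    ⨆ Q ∈ likelihoodRatioSet P k₁ k₂, Q.real A = lrDistortion k₁ k₂ (P.real A) := by
  obtain ⟨Q, hQ, hQA⟩ := exists_mem_likelihoodRatioSet_measureReal_eq (P := P) hk₁ hk₁1 hk₂ hA
  refine Real.biSup_eq_of_isGreatest (hQA ▸ measureReal_nonneg) ⟨⟨Q, hQ, hQA⟩, ?_⟩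
  rintro _ ⟨Q', hQ', rfl⟩
  exact measureReal_le_lrDistortion hk₁ (by linarith) hQ' hA

theorem iSup_LVaR_likelihoodRatioSet (hk₁ : 0 ≤ k₁) (hk₁1 : k₁ < 1) (hk₂ : 1 < k₂)
    {Λ Λ' : ℝ → ℝ} (hΛ : Monotone Λ) (hΛ1 : ∀ x, Λ x < 1)
    (hΛ' : ∀ x, lrDistortion k₁ k₂ (Λ' x) = Λ x) {X : Ω → ℝ} (hX : Measurable X) :
    ⨆ Q ∈ likelihoodRatioSet P k₁ k₂, LVaR Q.real Λ X = LVaR P.real Λ' X := by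
  have hmeas (x : ℝ) : MeasurableSet {ω | x < X ω} := measurableSet_lt measurable_const hX
  have hg_mono := lrDistortion_monotone hk₁ (zero_le_one.trans hk₂.le)
  refine le_antisymm (iSup₂_le fun Q hQ => LVaR_le_LVaR fun x hx => ?_) ?_
  · calc Q.real {ω | x < X ω} ≤ lrDistortion k₁ k₂ (P.real {ω | x < X ω}) :=
          measureReal_le_lrDistortion hk₁ (zero_le_one.trans hk₂.le) hQ (hmeas x)
      _ ≤ Λ x := (hg_mono hx).trans (hΛ' x).le
  · refine EReal.ge_of_forall_gt_iff_ge.1 fun x hx => ?_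
    obtain ⟨Q, hQ, hQx⟩ :=
      exists_mem_likelihoodRatioSet_measureReal_eq (P := P) hk₁ hk₁1 hk₂ (hmeas x)
    have : IsProbabilityMeasure Q := hQ.1
    have hΛQ : Λ x < Q.real {ω | x < X ω} := by
      rw [hQx, ← hΛ' x]
      exact lrDistortion_lt_lrDistortion hk₁ (by linarith) ((hΛ' x).trans_lt (hΛ1 x))
        (lt_of_coe_lt_LVaR hx)
    exact (coe_le_LVaR_of_lt (fun _ _ h => measureReal_mono h) hΛ hΛQ).trans
      (le_iSup₂ (f := fun Q _ => LVaR Q.real Λ X) Q hQ)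

end LikelihoodRatioSet

theorem stmt_15_general {Ω : Type*} [MeasurableSpace Ω] (ℙ : Measure Ω)
    [IsProbabilityMeasure ℙ]
    (k₁ k₂ : ℝ) (hk₁ : 0 ≤ k₁) (hk₁1 : k₁ < 1) (hk₂ : 1 < k₂)
    (g ginv : ℝ → ℝ) (hg : ∀ x : ℝ, g x = min (k₂ * x) (k₁ * x + 1 - k₁))
    (hginv : ∀ t ∈ Ico (0 : ℝ) 1, ginv t ∈ Icc (0 : ℝ) 1 ∧ g (ginv t) = t) :
    let Pset : Set (Measure Ω) := {Q | IsProbabilityMeasure Q ∧ Q ≪ ℙ ∧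
      ∀ᵐ ω ∂ℙ, k₁ ≤ (Q.rnDeriv ℙ ω).toReal ∧ (Q.rnDeriv ℙ ω).toReal ≤ k₂}
    (∀ A : Set Ω, MeasurableSet A →
      (⨆ Q ∈ Pset, (Q A).toReal) = g ((ℙ A).toReal)) ∧
    ∀ (Λ : ℝ → ℝ), Monotone Λ → (∀ x, Λ x ∈ Ioo (0 : ℝ) 1) →
      ∀ (X : Ω → ℝ), Measurable X →
        (⨆ Q ∈ Pset, LVaR (fun A => ((Q : Measure Ω) A).toReal) Λ X) =
          LVaR (fun A => (ℙ A).toReal) (fun x => ginv (Λ x)) X := by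
  obtain rfl : g = lrDistortion k₁ k₂ := funext hg
  refine ⟨fun A hA => iSup_measureReal_likelihoodRatioSet hk₁ hk₁1 hk₂ hA,
    fun Λ hΛ hΛ01 X hX => ?_⟩
  have hΛ1 (x : ℝ) : Λ x < 1 := (hΛ01 x).2
  exact iSup_LVaR_likelihoodRatioSet hk₁ hk₁1 hk₂ hΛ hΛ1
    (fun x => (hginv (Λ x) ⟨(hΛ01 x).1.le, hΛ1 x⟩).2) hX

/-- For likelihood-ratio uncertainty sets `𝓟(ℙ,k₁,k₂)` with constants `0 ≤ k₁ < 1 < k₂`: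
`sup_Q Q(A) = g(ℙ(A))` with `g(x) = min(k₂x, k₁x + 1 - k₁)`, and for any increasing
`Λ : ℝ → (0,1)`, `sup_Q ΛVaR^Q(X) = (g⁻¹∘Λ)VaR^ℙ(X)`, `ginv` being the inverse of `g`. -/
theorem stmt_15 {Ω : Type*} [MeasurableSpace Ω] (ℙ : Measure Ω)
    [IsProbabilityMeasure ℙ] [NullSingletonClass ℙ]
    (k₁ k₂ : ℝ) (hk₁ : 0 ≤ k₁) (hk₁1 : k₁ < 1) (hk₂ : 1 < k₂)
    (g ginv : ℝ → ℝ) (hg : ∀ x : ℝ, g x = min (k₂ * x) (k₁ * x + 1 - k₁))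
    (hginv : ∀ t ∈ Ico (0 : ℝ) 1, ginv t ∈ Icc (0 : ℝ) 1 ∧ g (ginv t) = t) :
    let Pset : Set (Measure Ω) := {Q | IsProbabilityMeasure Q ∧ Q ≪ ℙ ∧
      ∀ᵐ ω ∂ℙ, k₁ ≤ (Q.rnDeriv ℙ ω).toReal ∧ (Q.rnDeriv ℙ ω).toReal ≤ k₂}
    (∀ A : Set Ω, MeasurableSet A →
      (⨆ Q ∈ Pset, (Q A).toReal) = g ((ℙ A).toReal)) ∧
    ∀ (Λ : ℝ → ℝ), Monotone Λ → (∀ x, Λ x ∈ Ioo (0 : ℝ) 1) →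
      ∀ (X : Ω → ℝ), Measurable X →
        (⨆ Q ∈ Pset, LVaR (fun A => ((Q : Measure Ω) A).toReal) Λ X) =
          LVaR (fun A => (ℙ A).toReal) (fun x => ginv (Λ x)) X :=
  stmt_15_general ℙ k₁ k₂ hk₁ hk₁1 hk₂ g ginv hg hginv
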